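/- Let d ≥ 2 be an integer, let ψ ∈ ℂ^d be a unit vector, let A, B ∈ M_d be positive semidefinite matrices, and let p ∈ ℝ. If (Tr(A)·1_d + Aᵀ)/2 + (Tr(B)·1_d − Bᵀ)/2 = p·|ψ⟩⟨ψ|, then A = 0 and p ≥ 0; if moreover d > 2, then also B = 0 and p = 0. -/

import Mathlib

/-! Write `P = |ψ⟩⟨ψ|`. Taking the trace of the identity and its expectation in `ψ` both give `p`,
since `Tr P = ⟨ψ|P|ψ⟩ = 1`. Twice their difference is
`(d - 1) Tr A + (Tr A - ⟨ψ|Aᵀ|ψ⟩) + (d - 2) Tr B + ⟨ψ|Bᵀ|ψ⟩ = 0`,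
a sum of nonnegative terms: `⟨ψ|C|ψ⟩ ≤ Tr C` for `C ≥ 0` because `1 - P` is a projection.
So `Tr A = 0`, and `Tr B = 0` when `d > 2`; a positive semidefinite matrix of trace zero vanishes,
and then `2p = (d - 1) Tr B ≥ 0`. -/

open Matrix Kronecker BigOperators ComplexOrder

noncomputable section

/-- Entrywise complex conjugate `U̅` of a matrix. -/
def mconj {d : ℕ} (U : Matrix (Fin d) (Fin d) ℂ) : Matrix (Fin d) (Fin d) ℂ :=
  U.map (starRingEnd ℂ)

/-- Rank-one outer product `|v⟩⟨v|`. -/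
def outer {n : Type*} (v : n → ℂ) : Matrix n n ℂ :=
  Matrix.vecMulVec v (star v)

/-- Choi vector `|U⟩⟩ = Σ_i e_i ⊗ U e_i`. -/
def choiVec {d : ℕ} (U : Matrix (Fin d) (Fin d) ℂ) : Fin d × Fin d → ℂ :=
  fun p => U p.2 p.1

/-- `|U⟩⟩⟨⟨U|`. -/
def choiProj {d : ℕ} (U : Matrix (Fin d) (Fin d) ℂ) :
    Matrix (Fin d × Fin d) (Fin d × Fin d) ℂ :=
  outer (choiVec U)

/-- Partial trace over the first tensor factor. -/
def ptrLeft {α β : Type*} [Fintype α] (S : Matrix (α × β) (α × β) ℂ) :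
    Matrix β β ℂ :=
  fun b b' => ∑ a, S (a, b) (a, b')

/-- Partial trace over the second (last) tensor factor. -/
def ptrRight {α β : Type*} [Fintype β] (S : Matrix (α × β) (α × β) ℂ) :
    Matrix α α ℂ :=
  fun a a' => ∑ b, S (a, b) (a', b)

namespace Matrix

variable {R : Type*} [CommRing R] [PartialOrder R] [StarRing R] [StarOrderedRing R]
  {n : Type*} [Fintype n]

theorem PosSemidef.trace_mul_nonneg_of_isStarProjection {C Q : Matrix n n R}
    (hC : C.PosSemidef) (hQ : IsStarProjection Q) : 0 ≤ (C * Q).trace := by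
  have hQH : Qᴴ = Q := hQ.isSelfAdjoint
  calc (0 : R) ≤ (Q * C * Qᴴ).trace := (hC.mul_mul_conjTranspose_same Q).trace_nonneg
    _ = (C * Q).trace := by
      rw [hQH, trace_mul_cycle, hQ.isIdempotentElem.eq, trace_mul_comm]

theorem PosSemidef.eq_zero_of_mul_trace_add_eq_zero {𝕜 : Type*} [RCLike 𝕜]
    {C : Matrix n n 𝕜} (hC : C.PosSemidef) {c x : 𝕜} (hc : 0 < c) (hx : 0 ≤ x)
    (h : c * C.trace + x = 0) : C = 0 := by
  have hcC : c * C.trace = 0 :=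
    ((add_eq_zero_iff_of_nonneg (mul_nonneg hc.le hC.trace_nonneg) hx).mp h).1
  exact hC.trace_eq_zero_iff.mp ((mul_eq_zero.mp hcC).resolve_left hc.ne')

end Matrix

section outer

variable {n : Type*} [Fintype n]

theorem trace_mul_outer (C : Matrix n n ℂ) (ψ : n → ℂ) :
    (C * outer ψ).trace = star ψ ⬝ᵥ C *ᵥ ψ := by
  rw [outer, mul_vecMulVec, trace_vecMulVec, dotProduct_comm]

theorem trace_outer (ψ : n → ℂ) : (outer ψ).trace = star ψ ⬝ᵥ ψ := by
  rw [outer, trace_vecMulVec, dotProduct_comm]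

theorem isStarProjection_outer {ψ : n → ℂ} (hψ : star ψ ⬝ᵥ ψ = 1) :
    IsStarProjection (outer ψ) where
  isIdempotentElem := by
    rw [IsIdempotentElem, outer, vecMulVec_mul_vecMulVec, hψ, one_smul]
  isSelfAdjoint := by
    rw [IsSelfAdjoint, star_eq_conjTranspose, outer, conjTranspose_vecMulVec, star_star]

theorem Matrix.PosSemidef.dotProduct_mulVec_le_trace [DecidableEq n] {C : Matrix n n ℂ}
    (hC : C.PosSemidef) {ψ : n → ℂ} (hψ : star ψ ⬝ᵥ ψ = 1) : star ψ ⬝ᵥ C *ᵥ ψ ≤ C.trace := by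
  have := hC.trace_mul_nonneg_of_isStarProjection (isStarProjection_outer hψ).one_sub
  rwa [mul_sub, mul_one, trace_sub, trace_mul_outer, sub_nonneg] at this

theorem dotProduct_mulVec_outer {ψ : n → ℂ} (hψ : star ψ ⬝ᵥ ψ = 1) :
    star ψ ⬝ᵥ outer ψ *ᵥ ψ = 1 := by
  rw [outer, vecMulVec_mulVec, hψ, MulOpposite.op_one, one_smul, hψ]

theorem trace_smul_outer {ψ : n → ℂ} (hψ : star ψ ⬝ᵥ ψ = 1) (p : ℂ) :
    (p • outer ψ).trace = p := by
  rw [trace_smul, trace_outer, hψ, smul_eq_mul, mul_one]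

theorem dotProduct_smul_outer_mulVec {ψ : n → ℂ} (hψ : star ψ ⬝ᵥ ψ = 1) (p : ℂ) :
    star ψ ⬝ᵥ (p • outer ψ) *ᵥ ψ = p := by
  rw [smul_mulVec, dotProduct_smul, dotProduct_mulVec_outer hψ, smul_eq_mul, mul_one]

end outer

section sdpMatrix

variable {n : Type*} [Fintype n] [DecidableEq n]

def sdpMatrix (A B : Matrix n n ℂ) : Matrix n n ℂ :=
  (2 : ℂ)⁻¹ • (A.trace • 1 + Aᵀ) + (2 : ℂ)⁻¹ • (B.trace • 1 - Bᵀ)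

theorem two_mul_trace_sdpMatrix (A B : Matrix n n ℂ) :
    2 * (sdpMatrix A B).trace
      = (Fintype.card n + 1) * A.trace + (Fintype.card n - 1) * B.trace := by
  simp only [sdpMatrix, trace_add, trace_sub, trace_smul, trace_one, trace_transpose, smul_eq_mul]
  ring

theorem two_mul_dotProduct_sdpMatrix_mulVec (A B : Matrix n n ℂ) {ψ : n → ℂ}
    (hψ : star ψ ⬝ᵥ ψ = 1) :
    2 * (star ψ ⬝ᵥ sdpMatrix A B *ᵥ ψ)
      = A.trace + star ψ ⬝ᵥ Aᵀ *ᵥ ψ + (B.trace - star ψ ⬝ᵥ Bᵀ *ᵥ ψ) := by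
  simp only [sdpMatrix, add_mulVec, sub_mulVec, smul_mulVec, one_mulVec, dotProduct_add,
    dotProduct_sub, dotProduct_smul, smul_eq_mul, hψ]
  ring

theorem two_mul_eq_of_sdpMatrix_eq_smul_outer {A B : Matrix n n ℂ} {ψ : n → ℂ}
    (hψ : star ψ ⬝ᵥ ψ = 1) {p : ℂ} (h : sdpMatrix A B = p • outer ψ) :
    2 * p = (Fintype.card n + 1) * A.trace + (Fintype.card n - 1) * B.trace := by
  rw [← two_mul_trace_sdpMatrix, h, trace_smul_outer hψ]

theorem sum_eq_zero_of_sdpMatrix_eq_smul_outer {A B : Matrix n n ℂ} {ψ : n → ℂ}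
    (hψ : star ψ ⬝ᵥ ψ = 1) {p : ℂ} (h : sdpMatrix A B = p • outer ψ) :
    ((Fintype.card n - 1) * A.trace + (A.trace - star ψ ⬝ᵥ Aᵀ *ᵥ ψ))
      + ((Fintype.card n - 2) * B.trace + star ψ ⬝ᵥ Bᵀ *ᵥ ψ) = 0 := by
  have hExp := two_mul_dotProduct_sdpMatrix_mulVec A B hψ
  rw [h, dotProduct_smul_outer_mulVec hψ] at hExp
  linear_combination hExp - two_mul_eq_of_sdpMatrix_eq_smul_outer hψ h

end sdpMatrix

/-- **Key matrix identity for the conjugation/inversion SDPs.** If `A, B ≥ 0` and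
`(Tr(A)·1 + Aᵀ)/2 + (Tr(B)·1 − Bᵀ)/2 = p·|ψ⟩⟨ψ|` for a unit vector `ψ`, then
`A = 0` and `p ≥ 0`; if moreover `d > 2`, then also `B = 0` and `p = 0`. -/
theorem conjugation_sdp_identity
    (d : ℕ) (hd : 2 ≤ d) (ψ : Fin d → ℂ) (hψ : star ψ ⬝ᵥ ψ = 1)
    (A B : Matrix (Fin d) (Fin d) ℂ) (hA : A.PosSemidef) (hB : B.PosSemidef)
    (p : ℝ)
    (h : (2 : ℂ)⁻¹ • (A.trace • (1 : Matrix (Fin d) (Fin d) ℂ) + Aᵀ)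
        + (2 : ℂ)⁻¹ • (B.trace • (1 : Matrix (Fin d) (Fin d) ℂ) - Bᵀ)
        = (p : ℂ) • outer ψ) :
    A = 0 ∧ 0 ≤ p ∧ (2 < d → B = 0 ∧ p = 0) := by
  have hsum := sum_eq_zero_of_sdpMatrix_eq_smul_outer hψ h
  have hp := two_mul_eq_of_sdpMatrix_eq_smul_outer hψ h
  rw [Fintype.card_fin] at hsum hp
  have hd1 : (0 : ℂ) < d - 1 := sub_pos.mpr (by exact_mod_cast hd)
  have hd2 : (0 : ℂ) ≤ d - 2 := sub_nonneg.mpr (by exact_mod_cast hd)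
  have hAgap : 0 ≤ A.trace - star ψ ⬝ᵥ Aᵀ *ᵥ ψ :=
    sub_nonneg.mpr ((hA.transpose.dotProduct_mulVec_le_trace hψ).trans_eq (trace_transpose A))
  have hBgap : 0 ≤ star ψ ⬝ᵥ Bᵀ *ᵥ ψ := hB.transpose.dotProduct_mulVec_nonneg ψ
  obtain ⟨hAzero, hBzero⟩ := (add_eq_zero_iff_of_nonneg
    (add_nonneg (mul_nonneg hd1.le hA.trace_nonneg) hAgap)
    (add_nonneg (mul_nonneg hd2 hB.trace_nonneg) hBgap)).mp hsum
  have hA0 : A = 0 := hA.eq_zero_of_mul_trace_add_eq_zero hd1 hAgap hAzero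
  rw [hA0, trace_zero, mul_zero, zero_add, ← Complex.ofReal_ofNat, ← Complex.ofReal_mul] at hp
  have hp0 : 0 ≤ 2 * p := Complex.zero_le_real.mp (hp ▸ mul_nonneg hd1.le hB.trace_nonneg)
  refine ⟨hA0, by linarith, fun hd3 => ?_⟩
  have hB0 : B = 0 := hB.eq_zero_of_mul_trace_add_eq_zero
    (sub_pos.mpr (by exact_mod_cast hd3)) hBgap hBzero
  rw [hB0, trace_zero, mul_zero, Complex.ofReal_eq_zero] at hp
  exact ⟨hB0, by linarith⟩
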